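/- Let a ≥ 1, let w_1,…,w_a be indeterminates, set W(y) = ∏_{r=1}^a (y − w_r) and W_r(y) = ∏_{s≠r}(y − w_s), and let Z(y) ∈ ℂ[w_1,…,w_a][y] be any polynomial in y. Assume the w_r are specialized so that w_r − w_s ∉ {0, 1, −1} for all r ≠ s. Then the rational function Z(y)/(W(y)·W(y−1)) − ∑_{r=1}^a [ Z(w_r+1)/((y−w_r−1)·W_r(w_r+1)·W_r(w_r)) − Z(w_r)/((y−w_r)·W_r(w_r)·W_r(w_r−1)) ] is a polynomial in y. -/

import Mathlib

/-!
The 2a points `w r` and `w r + 1` are pairwise distinct, and `W(y) W(y - 1)` is their nodal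
polynomial. Dividing `Z` by it, the remainder has degree below the number of nodes, so it is the
Lagrange interpolant of `Z` at the nodes; its first barycentric form is exactly the sum of the
principal parts `Z(vᵢ) / ((y - vᵢ) ∏_{j ≠ i} (vᵢ - vⱼ))`, and what is left is the quotient.
Splitting the nodes into the two families `w r` and `w r + 1` produces the two kinds of terms.
-/

open Polynomial Finset Lagrange

namespace Lagrange

variable {F ι : Type*} [Field F] [DecidableEq ι] {s : Finset ι} {v : ι → F}

theorem interpolate_eval_eq_modByMonic_nodal (hvs : Set.InjOn v s) (f : F[X]) :
    interpolate s v (fun i => f.eval (v i)) = f %ₘ nodal s v := by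
  have hdeg : (f %ₘ nodal s v).degree < #s :=
    degree_nodal (v := v) ▸ degree_modByMonic_lt f nodal_monic
  rw [eq_interpolate hvs hdeg]
  refine interpolate_eq_of_values_eq_on _ _ fun i hi => ?_
  have hf := congrArg (eval (v i)) (modByMonic_add_div f (nodal s v))
  rw [eval_add, eval_mul, eval_nodal_at_node hi, zero_mul, add_zero] at hf
  exact hf.symm

theorem eval_div_eval_nodal_sub_sum (hvs : Set.InjOn v s) (f : F[X]) {x : F}
    (hx : ∀ i ∈ s, x ≠ v i) :
    f.eval x / (nodal s v).eval x - ∑ i ∈ s, nodalWeight s v i * (x - v i)⁻¹ * f.eval (v i) =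
      (f /ₘ nodal s v).eval x := by
  have hD := eval_nodal_not_at_node hx
  have hrem := eval_interpolate_not_at_node (fun i => f.eval (v i)) hx
  rw [interpolate_eval_eq_modByMonic_nodal hvs] at hrem
  have hf := congrArg (eval x) (modByMonic_add_div f (nodal s v))
  rw [eval_add, eval_mul, hrem] at hf
  rw [← hf]
  field_simp
  ring

end Lagrange

namespace Finset

variable {α β : Type*} [Fintype α] [Fintype β] [DecidableEq α] [DecidableEq β]

theorem univ_erase_inl (a : α) :
    (univ : Finset (α ⊕ β)).erase (.inl a) = (univ.erase a).disjSum univ := by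
  ext (x | x) <;> simp

theorem univ_erase_inr (b : β) :
    (univ : Finset (α ⊕ β)).erase (.inr b) = univ.disjSum (univ.erase b) := by
  ext (x | x) <;> simp

end Finset

namespace Lagrange

section SumElim

variable {F α β : Type*} [Field F] [Fintype α] [Fintype β]

theorem nodal_univ_sumElim (v₁ : α → F) (v₂ : β → F) :
    nodal univ (Sum.elim v₁ v₂) = nodal univ v₁ * nodal univ v₂ := by
  simp [nodal, Fintype.prod_sum_type]

variable [DecidableEq α] [DecidableEq β]

theorem nodalWeight_univ_sumElim_inl (v₁ : α → F) (v₂ : β → F) (a : α) :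
    nodalWeight univ (Sum.elim v₁ v₂) (.inl a) =
      nodalWeight univ v₁ a * ∏ b, (v₁ a - v₂ b)⁻¹ := by
  rw [nodalWeight, univ_erase_inl, prod_disjSum]
  rfl

theorem nodalWeight_univ_sumElim_inr (v₁ : α → F) (v₂ : β → F) (b : β) :
    nodalWeight univ (Sum.elim v₁ v₂) (.inr b) =
      (∏ a, (v₂ b - v₁ a)⁻¹) * nodalWeight univ v₂ b := by
  rw [nodalWeight, univ_erase_inr, prod_disjSum]
  rfl

end SumElim

variable {F ι : Type*} [Field F] [Fintype ι] [DecidableEq ι]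

theorem nodalWeight_univ_sumElim_add_one_inl (w : ι → F) (r : ι) :
    nodalWeight univ (Sum.elim w (w · + 1)) (.inl r) =
      -((∏ s ∈ univ.erase r, (w r - w s)) * ∏ s ∈ univ.erase r, (w r - 1 - w s))⁻¹ := by
  rw [nodalWeight_univ_sumElim_inl, nodalWeight, ← mul_prod_erase univ _ (mem_univ r), mul_inv,
    ← prod_inv_distrib, ← prod_inv_distrib, show w r - (w r + 1) = -1 by ring]
  simp only [sub_add_eq_sub_sub_swap, inv_neg, inv_one]
  ring

theorem nodalWeight_univ_sumElim_add_one_inr (w : ι → F) (r : ι) :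
    nodalWeight univ (Sum.elim w (w · + 1)) (.inr r) =
      ((∏ s ∈ univ.erase r, (w r + 1 - w s)) * ∏ s ∈ univ.erase r, (w r - w s))⁻¹ := by
  rw [nodalWeight_univ_sumElim_inr, nodalWeight,
    ← mul_prod_erase univ (fun s => (w r + 1 - w s)⁻¹) (mem_univ r), mul_inv,
    ← prod_inv_distrib, ← prod_inv_distrib, add_sub_cancel_left, inv_one, one_mul]
  simp only [add_sub_add_right_eq_sub]

end Lagrange

theorem stmt19_general (a : ℕ) (w : Fin a → ℂ)
    (hw : ∀ r s : Fin a, r ≠ s → w r - w s ≠ 0 ∧ w r - w s ≠ 1 ∧ w r - w s ≠ -1)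
    (Z : Polynomial ℂ) :
    ∃ Q : Polynomial ℂ, ∀ y : ℂ, (∀ r, y ≠ w r ∧ y ≠ w r + 1) →
      Z.eval y / ((∏ r, (y - w r)) * (∏ r, (y - 1 - w r)))
        - ∑ r, (Z.eval (w r + 1) /
              ((y - w r - 1) * (∏ s ∈ Finset.univ.erase r, (w r + 1 - w s)) *
                (∏ s ∈ Finset.univ.erase r, (w r - w s)))
            - Z.eval (w r) /
              ((y - w r) * (∏ s ∈ Finset.univ.erase r, (w r - w s)) *
                (∏ s ∈ Finset.univ.erase r, (w r - 1 - w s))))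
        = Q.eval y := by
  set v : Fin a ⊕ Fin a → ℂ := Sum.elim w (w · + 1)
  have hv : Set.InjOn v ↑(univ : Finset (Fin a ⊕ Fin a)) := by
    have hinj : Function.Injective w := fun r s h =>
      by_contra fun hrs => (hw r s hrs).1 (sub_eq_zero.mpr h)
    refine (hinj.sumElim ((add_left_injective 1).comp hinj) fun r s h => ?_).injOn
    obtain rfl | hrs := eq_or_ne r s
    · simp at h
    · exact (hw r s hrs).2.1 (by simp [h])
  refine ⟨Z /ₘ nodal univ v, fun y hy => ?_⟩
  have hyv : ∀ i ∈ univ, y ≠ v i := by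
    rintro (r | r) - <;> simp [v, hy r]
  rw [← eval_div_eval_nodal_sub_sum hv Z hyv, nodal_univ_sumElim, eval_mul, eval_nodal, eval_nodal,
    Fintype.sum_sum_type, ← sum_add_distrib]
  simp only [v, Sum.elim_inl, Sum.elim_inr, nodalWeight_univ_sumElim_add_one_inl,
    nodalWeight_univ_sumElim_add_one_inr, sub_add_eq_sub_sub_swap]
  congr 1
  refine sum_congr rfl fun r _ => ?_
  simp only [div_eq_mul_inv, mul_inv]
  ring

theorem stmt19 (a : ℕ) (ha : 1 ≤ a) (w : Fin a → ℂ)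
    (hw : ∀ r s : Fin a, r ≠ s → w r - w s ≠ 0 ∧ w r - w s ≠ 1 ∧ w r - w s ≠ -1)
    (Z : Polynomial ℂ) :
    ∃ Q : Polynomial ℂ, ∀ y : ℂ, (∀ r, y ≠ w r ∧ y ≠ w r + 1) →
      Z.eval y / ((∏ r, (y - w r)) * (∏ r, (y - 1 - w r)))
        - ∑ r, (Z.eval (w r + 1) /
              ((y - w r - 1) * (∏ s ∈ Finset.univ.erase r, (w r + 1 - w s)) *
                (∏ s ∈ Finset.univ.erase r, (w r - w s)))
            - Z.eval (w r) /
              ((y - w r) * (∏ s ∈ Finset.univ.erase r, (w r - w s)) *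
                (∏ s ∈ Finset.univ.erase r, (w r - 1 - w s))))
        = Q.eval y :=
  stmt19_general a w hw Z
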